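/- Fix a ∈ ℝ and r > 0, and set k₀ = a + √(a² + 1/r). For each T > 0 with a·T < 1, define on the interval (a, k^u(a,T)) the function J_T(k) = (1 + r·k²)·f_{a,T}(k), where f_{a,T}(k) = (−k·sinh(ℓT) − ℓ)/(2ℓ·(a − k·cosh(ℓT))) with ℓ = √(a² − k²) if |k| < −a; f_{a,T}(k) = T/4 + 1/(4|a|) if k = |a| and a ≠ 0; and f_{a,T}(k) = (−k·sin(ℓT) − ℓ)/(2ℓ·(a − k·cos(ℓT))) with ℓ = √(k² − a²) if |a| < k < k^u(a,T). Suppose that for every sufficiently small T > 0 there is a point k*(T) ∈ (a, k^u(a,T)) with J_T(k*(T)) ≤ J_T(k) for all k ∈ (a, k^u(a,T)). Then lim_{T→0⁺} k*(T) / ( k₀ − (a·k₀ + 1/r)·T ) = 1. -/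

import Mathlib

/-!
Write `J₀(k) = (1 + r k²) / (2 (k - a))` for the delay-free cost. Two estimates on the closed
forms of `f_{a,T}` drive the proof: `f_{a,T}(k) → 1 / (2 (k - a))` as `T → 0`, and
`f_{a,T}(k) ≥ (1 - T|a|) / (2 (k - a))` for every `k ∈ (a, k^u(a,T))` once `T|a| ≤ 1/2`.
In the oscillatory regime `|a| < k` the latter needs the denominator `k cos(ℓT) - a` to stay
positive, which holds because `T` lies below the critical delay `arccos (a/k) / √(k² - a²)` of
`k`, a decreasing function of `k`. Since `k^u(a,T) ≥ 1/T`, the gain `k₀` is admissible for small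
`T`, so minimality gives `J₀(k*(T)) ≤ J_T(k₀) / (1 - T|a|) → J₀(k₀)`, and the identity
`J₀(k) = J₀(k₀) + r (k - k₀)² / (2 (k - a))` forces `k*(T) → k₀`. The denominator in the
statement tends to `k₀` as well.
-/

open scoped Classical in
/-- The squared `L²`-norm of the fundamental solution of `dx/dt = a x(t) - k x(t-T)`,
for a stabilizing gain `k`. -/
noncomputable def fdel (T a k : ℝ) : ℝ :=
  if |k| < -a then
    (-k * Real.sinh (Real.sqrt (a ^ 2 - k ^ 2) * T) - Real.sqrt (a ^ 2 - k ^ 2)) /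
      (2 * Real.sqrt (a ^ 2 - k ^ 2) *
        (a - k * Real.cosh (Real.sqrt (a ^ 2 - k ^ 2) * T)))
  else if k = |a| ∧ a ≠ 0 then T / 4 + 1 / (4 * |a|)
  else
    (-k * Real.sin (Real.sqrt (k ^ 2 - a ^ 2) * T) - Real.sqrt (k ^ 2 - a ^ 2)) /
      (2 * Real.sqrt (k ^ 2 - a ^ 2) *
        (a - k * Real.cos (Real.sqrt (k ^ 2 - a ^ 2) * T)))

open Real Filter Set Topology

lemma Real.sinh_le_mul_cosh {x : ℝ} (hx : 0 ≤ x) : sinh x ≤ x * cosh x := by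
  refine hasSum_le (fun n => ?_) (hasSum_sinh x) ((hasSum_cosh x).mul_left x)
  calc x ^ (2 * n + 1) / ((2 * n + 1).factorial : ℝ)
      ≤ x ^ (2 * n + 1) / ((2 * n).factorial : ℝ) := by
        refine div_le_div_of_nonneg_left (by positivity) (by positivity) ?_
        exact_mod_cast Nat.factorial_le (Nat.le_succ _)
    _ = x * (x ^ (2 * n) / ((2 * n).factorial : ℝ)) := by ring

lemma Real.cosh_le_one_add_sq {x : ℝ} (hx : x ^ 2 ≤ 2) : cosh x ≤ 1 + x ^ 2 := by
  have hx' : |x ^ 2 / 2| = x ^ 2 / 2 := abs_of_nonneg (by positivity)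
  have h := abs_exp_sub_one_le (x := x ^ 2 / 2) (by rw [hx']; linarith)
  rw [hx'] at h
  linarith [(abs_le.mp h).2, cosh_le_exp_half_sq x]

lemma Real.sqrt_sq_sub_sq_le_abs (a k : ℝ) : √(a ^ 2 - k ^ 2) ≤ |a| :=
  sqrt_sq_eq_abs a ▸ sqrt_le_sqrt (by linarith [sq_nonneg k])

lemma Real.sqrt_one_sub_sq_le_arccos (x : ℝ) : √(1 - x ^ 2) ≤ arccos x :=
  sin_arccos x ▸ sin_le (arccos_nonneg x)

lemma Real.mul_sqrt_one_sub_sq_lt_arccos {x : ℝ} (hx₁ : -1 < x) (hx₂ : x < 1) :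
    x * √(1 - x ^ 2) < arccos x := by
  have hu : 0 < arccos x := arccos_pos.2 hx₂
  have hsin : x * √(1 - x ^ 2) = sin (2 * arccos x) / 2 := by
    rw [sin_two_mul, sin_arccos, cos_arccos hx₁.le hx₂.le]; ring
  rw [hsin]
  linarith [sin_lt (by positivity : 0 < 2 * arccos x)]

lemma Real.sqrt_one_sub_div_sq {a k : ℝ} (hk : 0 < k) :
    √(1 - (a / k) ^ 2) = √(k ^ 2 - a ^ 2) / k := by
  rw [show 1 - (a / k) ^ 2 = (k ^ 2 - a ^ 2) / k ^ 2 by field_simp, sqrt_div' _ (sq_nonneg k),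
    sqrt_sq hk.le]

lemma sub_sq_pos_of_abs_lt {a k : ℝ} (hk : |a| < k) : 0 < k ^ 2 - a ^ 2 := by
  nlinarith [sq_abs a, abs_nonneg a]

lemma abs_div_lt_one_of_abs_lt {a k : ℝ} (hk : |a| < k) : |a / k| < 1 := by
  have hk0 : 0 < k := (abs_nonneg a).trans_lt hk
  rwa [abs_div, abs_of_pos hk0, div_lt_one hk0]

-- The largest delay that the gain `k > |a|` stabilizes; `k^u(a, T)` is its inverse function.
noncomputable def criticalDelay (a k : ℝ) : ℝ := arccos (a / k) / √(k ^ 2 - a ^ 2)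

lemma hasDerivAt_criticalDelay {a k : ℝ} (hk : |a| < k) :
    HasDerivAt (criticalDelay a)
      ((a / k - arccos (a / k) * k / √(k ^ 2 - a ^ 2)) / (k ^ 2 - a ^ 2)) k := by
  have hk0 : 0 < k := (abs_nonneg a).trans_lt hk
  have hsq := sub_sq_pos_of_abs_lt hk
  have hx := abs_lt.mp (abs_div_lt_one_of_abs_lt hk)
  have hdiv : HasDerivAt (fun k => a / k) (-(a / k ^ 2)) k := by
    simpa [div_eq_mul_inv] using (hasDerivAt_inv hk0.ne').const_mul a
  have harccos := (hasDerivAt_arccos hx.1.ne' hx.2.ne).comp k hdiv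
  have hsqrt := ((hasDerivAt_pow 2 k).sub_const (a ^ 2)).sqrt hsq.ne'
  refine (harccos.div hsqrt (sqrt_pos.2 hsq).ne').congr_deriv ?_
  rw [Function.comp_apply, sqrt_one_sub_div_sq hk0, sq_sqrt hsq.le]
  field_simp
  ring

lemma criticalDelay_strictAntiOn (a : ℝ) : StrictAntiOn (criticalDelay a) (Ioi |a|) := by
  refine strictAntiOn_of_deriv_neg (convex_Ioi _)
    (fun k hk => (hasDerivAt_criticalDelay hk).continuousAt.continuousWithinAt) fun k hk => ?_
  rw [interior_Ioi] at hk
  have hk0 : 0 < k := (abs_nonneg a).trans_lt hk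
  have hsq := sub_sq_pos_of_abs_lt hk
  have hx := abs_lt.mp (abs_div_lt_one_of_abs_lt hk)
  have hl : 0 < √(k ^ 2 - a ^ 2) := sqrt_pos.2 hsq
  have key := mul_sqrt_one_sub_sq_lt_arccos hx.1 hx.2
  rw [sqrt_one_sub_div_sq hk0] at key
  rw [(hasDerivAt_criticalDelay hk).deriv]
  refine div_neg_of_neg_of_pos ?_ hsq
  rw [sub_neg, lt_div_iff₀ hl]
  calc a / k * √(k ^ 2 - a ^ 2) = a / k * (√(k ^ 2 - a ^ 2) / k) * k := by field_simp
    _ < arccos (a / k) * k := by gcongr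

lemma criticalDelay_eq {T a K : ℝ} (hK : |a| < K)
    (hKT : T * √(K ^ 2 - a ^ 2) = arccos (a / K)) : criticalDelay a K = T := by
  rw [criticalDelay, ← hKT, mul_div_cancel_right₀ _ (sqrt_pos.2 (sub_sq_pos_of_abs_lt hK)).ne']

lemma mul_sqrt_lt_arccos_of_lt {T a k K : ℝ} (hk : |a| < k) (hkK : k < K)
    (hKT : T * √(K ^ 2 - a ^ 2) = arccos (a / K)) : T * √(k ^ 2 - a ^ 2) < arccos (a / k) := by
  have h := criticalDelay_strictAntiOn a hk (hk.trans hkK) hkK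
  rwa [criticalDelay_eq (hk.trans hkK) hKT, criticalDelay,
    lt_div_iff₀ (sqrt_pos.2 (sub_sq_pos_of_abs_lt hk))] at h

lemma one_le_mul_of_mul_sqrt_eq_arccos {T a K : ℝ} (hK : |a| < K)
    (hKT : T * √(K ^ 2 - a ^ 2) = arccos (a / K)) : 1 ≤ T * K := by
  have hK₀ : 0 < K := (abs_nonneg a).trans_lt hK
  have hl : 0 < √(K ^ 2 - a ^ 2) := sqrt_pos.2 (sub_sq_pos_of_abs_lt hK)
  have h := sqrt_one_sub_sq_le_arccos (a / K)
  rw [sqrt_one_sub_div_sq hK₀, ← hKT, div_le_iff₀ hK₀] at h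
  exact (le_mul_iff_one_le_left hl).1 (by linarith)

lemma fdel_of_abs_lt_neg {T a k : ℝ} (hk : |k| < -a) :
    fdel T a k = (k * sinh (√(a ^ 2 - k ^ 2) * T) + √(a ^ 2 - k ^ 2)) /
      (2 * √(a ^ 2 - k ^ 2) * (k * cosh (√(a ^ 2 - k ^ 2) * T) - a)) := by
  rw [fdel, if_pos hk, ← neg_div_neg_eq]
  ring_nf

lemma fdel_of_abs_lt {T a k : ℝ} (hk : |a| < k) :
    fdel T a k = (k * sin (√(k ^ 2 - a ^ 2) * T) + √(k ^ 2 - a ^ 2)) /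
      (2 * √(k ^ 2 - a ^ 2) * (k * cos (√(k ^ 2 - a ^ 2) * T) - a)) := by
  have hk₁ : ¬|k| < -a := by
    rw [abs_of_pos ((abs_nonneg a).trans_lt hk)]; linarith [neg_le_abs a]
  have hk₂ : ¬(k = |a| ∧ a ≠ 0) := fun h => hk.ne' h.1
  rw [fdel, if_neg hk₁, if_neg hk₂, ← neg_div_neg_eq]
  ring_nf

lemma fdel_abs {T a : ℝ} (ha : a ≠ 0) : fdel T a |a| = T / 4 + 1 / (4 * |a|) := by
  rw [fdel, if_neg (by rw [abs_abs]; exact not_lt.2 (neg_le_abs a)), if_pos ⟨rfl, ha⟩]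

lemma one_div_le_fdel_of_abs_lt {T a k : ℝ} (hk : |a| < k) (hT : 0 ≤ T)
    (hθ : T * √(k ^ 2 - a ^ 2) < arccos (a / k)) : 1 / (2 * (k - a)) ≤ fdel T a k := by
  have hk0 : 0 < k := (abs_nonneg a).trans_lt hk
  rw [fdel_of_abs_lt hk]
  set ℓ := √(k ^ 2 - a ^ 2)
  have hℓ : 0 < ℓ := sqrt_pos.2 (sub_sq_pos_of_abs_lt hk)
  have hθ₀ : 0 ≤ ℓ * T := by positivity
  have hθπ : ℓ * T < π := by linarith [arccos_le_pi (a / k)]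
  have hsin : 0 ≤ sin (ℓ * T) := sin_nonneg_of_nonneg_of_le_pi hθ₀ hθπ.le
  have hcos : a / k < cos (ℓ * T) := by
    have hx := abs_lt.mp (abs_div_lt_one_of_abs_lt hk)
    have := cos_lt_cos_of_nonneg_of_le_pi hθ₀ (arccos_le_pi _) (by linarith)
    rwa [cos_arccos hx.1.le hx.2.le] at this
  have hden : 0 < k * cos (ℓ * T) - a := by
    have := (div_lt_iff₀ hk0).1 hcos; linarith
  have hka : a < k := (le_abs_self a).trans_lt hk
  rw [div_le_div_iff₀ (by linarith) (by positivity)]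
  have hcos₁ : k * cos (ℓ * T) ≤ k := mul_le_of_le_one_right hk0.le (cos_le_one _)
  nlinarith [mul_nonneg (mul_nonneg hk0.le hsin) (sub_pos.2 hka).le]

lemma one_div_le_fdel_of_nonneg {T a k : ℝ} (hk₀ : 0 ≤ k) (hka : k < -a) (hT : 0 ≤ T) :
    1 / (2 * (k - a)) ≤ fdel T a k := by
  have ha : |a| = -a := abs_of_neg (by linarith)
  rw [fdel_of_abs_lt_neg (by rwa [abs_of_nonneg hk₀])]
  set ℓ := √(a ^ 2 - k ^ 2)
  have hℓ : 0 < ℓ := sqrt_pos.2 (by nlinarith)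
  have hℓa : ℓ ≤ -a := ha ▸ sqrt_sq_sub_sq_le_abs a k
  have hθ : 0 ≤ ℓ * T := by positivity
  have hsinh : 0 ≤ sinh (ℓ * T) := sinh_nonneg_iff.2 hθ
  have hcosh : cosh (ℓ * T) - 1 ≤ sinh (ℓ * T) := by
    linarith [cosh_sub_sinh (ℓ * T), exp_le_one_iff.2 (neg_nonpos.2 hθ)]
  have hcosh₁ : 1 ≤ cosh (ℓ * T) := one_le_cosh _
  have hden : 0 < k * cosh (ℓ * T) - a := by nlinarith
  rw [div_le_div_iff₀ (by linarith) (by positivity)]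
  -- the difference of the two sides is `2k((k - a) sinh θ - ℓ (cosh θ - 1)) ≥ 0`
  nlinarith [mul_nonneg hk₀ (mul_nonneg (by linarith : 0 ≤ k - a - ℓ) hsinh),
    mul_nonneg hk₀ (mul_nonneg hℓ.le (by linarith : 0 ≤ sinh (ℓ * T) - (cosh (ℓ * T) - 1)))]

lemma one_sub_mul_abs_div_le_fdel_of_neg {T a k : ℝ} (hak : a < k) (hk : k < 0) (hT : 0 ≤ T)
    (hTa : T * |a| ≤ 1 / 2) : (1 - T * |a|) / (2 * (k - a)) ≤ fdel T a k := by
  have ha : |a| = -a := abs_of_neg (by linarith)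
  rw [ha] at hTa ⊢
  rw [fdel_of_abs_lt_neg (by rw [abs_of_neg hk]; linarith)]
  set ℓ := √(a ^ 2 - k ^ 2)
  have hℓsq : ℓ ^ 2 = a ^ 2 - k ^ 2 := sq_sqrt (by nlinarith)
  have hℓ : 0 < ℓ := sqrt_pos.2 (by nlinarith)
  have hℓa : ℓ ≤ -a := ha ▸ sqrt_sq_sub_sq_le_abs a k
  set θ := ℓ * T
  have hθ : 0 ≤ θ := by positivity
  have hθa : θ ≤ 1 / 2 := by nlinarith
  have hkθ : -k * (1 + θ ^ 2) < -a := by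
    have : -k * θ ^ 2 ≤ (-a - -k) / 2 := by
      have hsmall : -k * (-a + -k) * T ^ 2 ≤ 1 / 2 := by
        have h₁ : -k * (-a + -k) ≤ 2 * (-a) ^ 2 := by nlinarith
        have h₂ : (T * -a) ^ 2 ≤ 1 / 4 := by nlinarith [mul_nonneg hT (by linarith : (0:ℝ) ≤ -a)]
        nlinarith [mul_le_mul_of_nonneg_right h₁ (sq_nonneg T)]
      calc -k * θ ^ 2 = (-a - -k) * (-k * (-a + -k) * T ^ 2) := by rw [mul_pow, hℓsq]; ring
        _ ≤ (-a - -k) * (1 / 2) := mul_le_mul_of_nonneg_left hsmall (by linarith)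
        _ = (-a - -k) / 2 := by ring
    linarith
  have hcosh : cosh θ ≤ 1 + θ ^ 2 := cosh_le_one_add_sq (by nlinarith)
  have hden : 0 < k * cosh θ - a := by nlinarith
  have hden' : k * cosh θ - a ≤ k - a := by nlinarith [one_le_cosh θ]
  have hnum : (1 - T * -a) * ℓ ≤ k * sinh θ + ℓ := by
    have : -k * sinh θ ≤ θ * -a := by
      nlinarith [sinh_le_mul_cosh hθ]
    nlinarith
  rw [div_le_div_iff₀ (by linarith) (by positivity)]
  nlinarith [mul_le_mul_of_nonneg_left hden' (mul_nonneg (by linarith : 0 ≤ 1 - T * -a) hℓ.le)]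

lemma one_sub_mul_abs_div_le_fdel {T a k K : ℝ} (hT : 0 ≤ T) (hTa : T * |a| ≤ 1 / 2)
    (hKT : T * √(K ^ 2 - a ^ 2) = arccos (a / K)) (hak : a < k) (hkK : k < K) :
    (1 - T * |a|) / (2 * (k - a)) ≤ fdel T a k := by
  have hweaken : (1 - T * |a|) / (2 * (k - a)) ≤ 1 / (2 * (k - a)) :=
    div_le_div_of_nonneg_right (sub_le_self _ (by positivity)) (by linarith)
  rcases lt_or_ge k 0 with hk | hk
  · exact one_sub_mul_abs_div_le_fdel_of_neg hak hk hT hTa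
  have ha : k ≤ |a| → a < 0 := fun h => by
    by_contra! ha
    exact h.not_gt (by rwa [abs_of_nonneg ha])
  rcases lt_trichotomy k |a| with hka | rfl | hka
  · have ha := ha hka.le
    exact hweaken.trans (one_div_le_fdel_of_nonneg hk (by rwa [abs_of_neg ha] at hka) hT)
  · have ha := ha le_rfl
    refine hweaken.trans ?_
    rw [fdel_abs ha.ne, abs_of_neg ha, show 2 * (-a - a) = 4 * -a by ring]
    linarith
  · exact hweaken.trans (one_div_le_fdel_of_abs_lt hka hT (mul_sqrt_lt_arccos_of_lt hka hkK hKT))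

lemma tendsto_fdel_formula {s c : ℝ → ℝ} {ℓ k a : ℝ} (hs : Continuous s) (hc : Continuous c)
    (hs₀ : s 0 = 0) (hc₀ : c 0 = 1) (hℓ : ℓ ≠ 0) (hka : k ≠ a) :
    Tendsto (fun T => (k * s (ℓ * T) + ℓ) / (2 * ℓ * (k * c (ℓ * T) - a))) (𝓝 0)
      (𝓝 (1 / (2 * (k - a)))) := by
  have hka' : k - a ≠ 0 := sub_ne_zero.2 hka
  have hcont : ContinuousAt (fun T => (k * s (ℓ * T) + ℓ) / (2 * ℓ * (k * c (ℓ * T) - a))) 0 :=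
    ((by fun_prop : Continuous fun T => k * s (ℓ * T) + ℓ).continuousAt).div
      (by fun_prop : Continuous fun T => 2 * ℓ * (k * c (ℓ * T) - a)).continuousAt
      (by simp [hc₀, hℓ, hka'])
  convert hcont.tendsto using 2
  simp only [mul_zero, hs₀, hc₀, zero_add]
  field_simp

lemma tendsto_fdel {a k : ℝ} (hak : a < k) :
    Tendsto (fun T => fdel T a k) (𝓝 0) (𝓝 (1 / (2 * (k - a)))) := by
  by_cases hk : |k| < -a
  · simp_rw [fdel_of_abs_lt_neg hk]
    exact tendsto_fdel_formula continuous_sinh continuous_cosh sinh_zero cosh_zero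
      (sqrt_pos.2 (by nlinarith [sq_abs k, abs_nonneg k])).ne' hak.ne'
  have hk' : |a| ≤ k := by
    rcases lt_or_ge k 0 with hk₀ | hk₀
    · exact absurd (by rw [abs_of_neg hk₀]; linarith) hk
    · rw [abs_of_nonneg hk₀] at hk
      exact abs_le'.2 ⟨hak.le, by linarith⟩
  rcases hk'.lt_or_eq with hk' | rfl
  · simp_rw [fdel_of_abs_lt hk']
    exact tendsto_fdel_formula continuous_sin continuous_cos sin_zero cos_zero
      (sqrt_pos.2 (sub_sq_pos_of_abs_lt hk')).ne' hak.ne'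
  · have ha : a < 0 := by
      by_contra! ha
      exact hak.ne (abs_of_nonneg ha).symm
    simp_rw [fdel_abs ha.ne, abs_of_neg ha]
    have h : Tendsto (fun T : ℝ => T / 4 + 1 / (4 * -a)) (𝓝 0) (𝓝 (0 / 4 + 1 / (4 * -a))) :=
      ((continuous_id.div_const 4).add continuous_const).tendsto 0
    convert h using 2
    ring

noncomputable def delayFreeCost (a r k : ℝ) : ℝ := (1 + r * k ^ 2) / (2 * (k - a))

noncomputable def optimalGain (a r : ℝ) : ℝ := a + √(a ^ 2 + 1 / r)

lemma optimalGain_pos (a : ℝ) {r : ℝ} (hr : 0 < r) : 0 < optimalGain a r := by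
  have : |a| < √(a ^ 2 + 1 / r) := by
    rw [← sqrt_sq_eq_abs]
    exact sqrt_lt_sqrt (sq_nonneg a) (by linarith [one_div_pos.2 hr])
  rw [optimalGain]
  linarith [neg_abs_le a]

lemma lt_optimalGain (a : ℝ) {r : ℝ} (hr : 0 < r) : a < optimalGain a r :=
  lt_add_of_pos_right a (sqrt_pos.2 (by positivity))

lemma delayFreeCost_eq_add {a r k : ℝ} (hr : 0 < r) (hk : a < k) :
    delayFreeCost a r k = delayFreeCost a r (optimalGain a r)
      + r * (k - optimalGain a r) ^ 2 / (2 * (k - a)) := by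
  have hs : 0 < √(a ^ 2 + 1 / r) := sqrt_pos.2 (by positivity)
  have hs2 : r * √(a ^ 2 + 1 / r) ^ 2 = r * a ^ 2 + 1 := by
    rw [sq_sqrt (by positivity)]; field_simp
  have hka : k - a ≠ 0 := (sub_pos.2 hk).ne'
  rw [delayFreeCost, delayFreeCost, optimalGain, add_sub_cancel_left]
  set s := √(a ^ 2 + 1 / r)
  field_simp
  linear_combination (k - a - s) * hs2

lemma tendsto_mul_fdel_div {a r k : ℝ} (hak : a < k) :
    Tendsto (fun T => (1 + r * k ^ 2) * fdel T a k / (1 - T * |a|)) (𝓝 0)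
      (𝓝 (delayFreeCost a r k)) := by
  have h : Tendsto (fun T => (1 + r * k ^ 2) * fdel T a k / (1 - T * |a|)) (𝓝 0)
      (𝓝 ((1 + r * k ^ 2) * (1 / (2 * (k - a))) / 1)) :=
    ((tendsto_fdel hak).const_mul _).div
      ((by fun_prop : Continuous fun T : ℝ => 1 - T * |a|).tendsto' 0 1 (by simp)) one_ne_zero
  convert h using 2
  rw [delayFreeCost]
  ring

lemma one_sub_mul_abs_mul_delayFreeCost_le {T a r k K : ℝ} (hr : 0 ≤ r) (hT : 0 ≤ T)
    (hTa : T * |a| ≤ 1 / 2) (hKT : T * √(K ^ 2 - a ^ 2) = arccos (a / K))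
    (hak : a < k) (hkK : k < K) :
    (1 - T * |a|) * delayFreeCost a r k ≤ (1 + r * k ^ 2) * fdel T a k :=
  calc (1 - T * |a|) * delayFreeCost a r k
        = (1 + r * k ^ 2) * ((1 - T * |a|) / (2 * (k - a))) := by rw [delayFreeCost]; ring
    _ ≤ (1 + r * k ^ 2) * fdel T a k :=
        mul_le_mul_of_nonneg_left (one_sub_mul_abs_div_le_fdel hT hTa hKT hak hkK) (by positivity)

lemma tendsto_optimalGain_of_delayFreeCost_le {α : Type*} {l : Filter α} {a r : ℝ} {x g : α → ℝ}
    (hr : 0 < r) (hx : ∀ᶠ t in l, a < x t)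
    (hg : Tendsto g l (𝓝 (delayFreeCost a r (optimalGain a r))))
    (hle : ∀ᶠ t in l, delayFreeCost a r (x t) ≤ g t) : Tendsto x l (𝓝 (optimalGain a r)) := by
  set k₀ := optimalGain a r
  set c : α → ℝ := fun t => 2 * (g t - delayFreeCost a r k₀) / r
  have hc : Tendsto c l (𝓝 0) := by
    simpa [c] using ((hg.sub_const (delayFreeCost a r k₀)).const_mul 2).div_const r
  have hbound : Tendsto (fun t => c t ^ 2 + 2 * c t * (k₀ - a)) l (𝓝 0) := by
    simpa using (hc.pow 2).add ((hc.const_mul 2).mul_const (k₀ - a))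
  rw [Metric.tendsto_nhds]
  intro ε hε
  filter_upwards [hx, hle, hbound.eventually_lt_const (pow_pos hε 2)] with t hxt hlet hbt
  refine abs_lt_of_sq_lt_sq (lt_of_le_of_lt ?_ hbt) hε.le
  have hsq : (x t - k₀) ^ 2 ≤ c t * (x t - a) := by
    have hxa : 0 < x t - a := sub_pos.2 hxt
    rw [delayFreeCost_eq_add hr hxt, ← le_sub_iff_add_le', div_le_iff₀ (by positivity)] at hlet
    simp only [c]
    rw [div_mul_eq_mul_div, le_div_iff₀ hr]
    linarith
  -- `c (x - k₀) ≤ ((x - k₀)² + c²) / 2`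
  nlinarith [sq_nonneg (x t - k₀ - c t)]

theorem stmt10 (a r : ℝ) (hr : 0 < r)
    (ku : ℝ → ℝ)
    (hku : ∀ T : ℝ, 0 < T → a * T < 1 →
      |a| < ku T ∧ T * Real.sqrt ((ku T) ^ 2 - a ^ 2) = Real.arccos (a / ku T))
    (kstar : ℝ → ℝ)
    (hmin : ∀ᶠ T in nhdsWithin 0 (Set.Ioi (0 : ℝ)), kstar T ∈ Set.Ioo a (ku T) ∧
      ∀ k ∈ Set.Ioo a (ku T),
        (1 + r * (kstar T) ^ 2) * fdel T a (kstar T) ≤ (1 + r * k ^ 2) * fdel T a k) :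
    Filter.Tendsto
      (fun T : ℝ => kstar T /
        ((a + Real.sqrt (a ^ 2 + 1 / r)) -
          (a * (a + Real.sqrt (a ^ 2 + 1 / r)) + 1 / r) * T))
      (nhdsWithin 0 (Set.Ioi (0 : ℝ))) (nhds 1) := by
  change Tendsto (fun T => kstar T / (optimalGain a r - (a * optimalGain a r + 1 / r) * T)) _ _
  set k₀ := optimalGain a r
  have hk₀ : 0 < k₀ := optimalGain_pos a hr
  have hkstar : Tendsto kstar (𝓝[>] 0) (𝓝 k₀) := by
    refine tendsto_optimalGain_of_delayFreeCost_le hr (hmin.mono fun T h => h.1.1)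
      ((tendsto_mul_fdel_div (lt_optimalGain a hr)).mono_left nhdsWithin_le_nhds) ?_
    filter_upwards [hmin, Ioo_mem_nhdsGT (by positivity : (0 : ℝ) < 1 / (2 * (|a| + k₀)))]
      with T ⟨hks, hopt⟩ ⟨hT, hTsmall⟩
    rw [lt_div_iff₀ (by positivity)] at hTsmall
    have hTa : T * |a| ≤ 1 / 2 := by nlinarith
    obtain ⟨hK, hKT⟩ := hku T hT (by nlinarith [le_abs_self a])
    have hTk₀ : T * k₀ < T * ku T := by
      nlinarith [one_le_mul_of_mul_sqrt_eq_arccos hK hKT, mul_nonneg hT.le (abs_nonneg a)]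
    have hk₀K : k₀ < ku T := lt_of_mul_lt_mul_left hTk₀ hT.le
    rw [le_div_iff₀ (by linarith), mul_comm]
    exact (one_sub_mul_abs_mul_delayFreeCost_le hr.le hT.le hTa hKT hks.1 hks.2).trans
      (hopt k₀ ⟨lt_optimalGain a hr, hk₀K⟩)
  have hden : Tendsto (fun T => k₀ - (a * k₀ + 1 / r) * T) (𝓝[>] 0) (𝓝 k₀) :=
    ((by fun_prop : Continuous fun T : ℝ => k₀ - (a * k₀ + 1 / r) * T).tendsto' 0 k₀
      (by simp)).mono_left nhdsWithin_le_nhds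
  have h := hkstar.div hden hk₀.ne'
  rwa [div_self hk₀.ne'] at h
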